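/- Define T : ℤ → ℤ by T(n) = (7n+1)/4 if n ≡ 1 (mod 4), T(n) = (7n-1)/4 if n ≡ 3 (mod 4), and T(n) = n/2 if n is even. Then for any integer l ≥ 0, T induces a map from residues modulo 2^(l+2) to residues modulo 2^l under which each residue class modulo 2^l has exactly 4 preimages; i.e., the output of T is uniformly distributed modulo 2^l when the input is uniformly distributed modulo 2^(l+2). -/

import Mathlib

def T (n : ℕ) : ℕ :=
  if n % 4 = 1 then (7 * n + 1) / 4
  else if n % 4 = 3 then (7 * n - 1) / 4
  else n / 2

/-! Shifting the input by `4m` shifts `T` by `2m` or `7m`, so `T x mod N` only depends on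
`x mod 4N`. A residue `r < N` has the preimages `2r` and `2(r + N)` and, as `7` is invertible
mod `N`, one preimage `≡ 1` and one `≡ 3 (mod 4)`; since `4N` inputs are spread over `N`
residues, no residue can have more than four. -/

open Finset

theorem Finset.card_filter_eq_of_le_card_filter {α β : Type*} [DecidableEq β] {s : Finset α}
    {t : Finset β} {f : α → β} {k : ℕ} (hf : ∀ a ∈ s, f a ∈ t)
    (hk : ∀ b ∈ t, k ≤ #(s.filter (f · = b))) (hs : #s = #t * k) :
    ∀ b ∈ t, #(s.filter (f · = b)) = k := by
  have hsum : ∑ b ∈ t, k = ∑ b ∈ t, #(s.filter (f · = b)) := by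
    rw [sum_const, smul_eq_mul, ← hs, card_eq_sum_card_fiberwise hf]
  intro b hb
  exact ((sum_eq_sum_iff_of_le hk).mp hsum b hb).symm

theorem Nat.exists_lt_mul_add_mod_eq {a N : ℕ} (ha : a.Coprime N) (c : ℕ) {r : ℕ}
    (hr : r < N) :
    ∃ t < N, (a * t + c) % N = r := by
  have : NeZero N := ⟨by omega⟩
  set u := ZMod.unitOfCoprime a ha
  refine ⟨(((r : ZMod N) - c) * ↑u⁻¹).val, ZMod.val_lt _, ?_⟩
  rw [← ZMod.val_natCast]
  conv_rhs => rw [← ZMod.val_natCast_of_lt hr]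
  congr 1
  push_cast
  rw [ZMod.natCast_val, ZMod.cast_id, ← ZMod.coe_unitOfCoprime a ha, mul_left_comm,
    Units.mul_inv, mul_one, sub_add_cancel]

theorem T_four_mul_add_one (t : ℕ) : T (4 * t + 1) = 7 * t + 2 := by
  unfold T; split_ifs <;> omega

theorem T_four_mul_add_three (t : ℕ) : T (4 * t + 3) = 7 * t + 5 := by
  unfold T; split_ifs <;> omega

theorem T_two_mul (n : ℕ) : T (2 * n) = n := by
  unfold T; split_ifs <;> omega

theorem T_add_four_mul (x m : ℕ) : T (x + 4 * m) = T x + (if x % 2 = 0 then 2 else 7) * m := by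
  unfold T; split_ifs <;> omega

theorem T_mod_four_mul_mod (x N : ℕ) : T (x % (4 * N)) % N = T x % N := by
  conv_rhs => rw [← Nat.mod_add_div x (4 * N), mul_assoc, T_add_four_mul, mul_left_comm,
    Nat.add_mul_mod_self_left]

theorem four_le_card_filter_T_mod_eq {N r : ℕ} (hN : Nat.Coprime 7 N) (hr : r < N) :
    4 ≤ #((range (4 * N)).filter (T · % N = r)) := by
  obtain ⟨t₁, ht₁, hT₁⟩ := Nat.exists_lt_mul_add_mod_eq hN 2 hr
  obtain ⟨t₃, ht₃, hT₃⟩ := Nat.exists_lt_mul_add_mod_eq hN 5 hr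
  have hsub : {2 * r, 2 * (r + N), 4 * t₁ + 1, 4 * t₃ + 3} ⊆
      (range (4 * N)).filter (T · % N = r) := by
    intro x hx
    simp only [mem_insert, mem_singleton] at hx
    rw [mem_filter, mem_range]
    rcases hx with rfl | rfl | rfl | rfl
    · exact ⟨by omega, by rw [T_two_mul, Nat.mod_eq_of_lt hr]⟩
    · exact ⟨by omega, by rw [T_two_mul, Nat.add_mod_right, Nat.mod_eq_of_lt hr]⟩
    · exact ⟨by omega, by rwa [T_four_mul_add_one]⟩
    · exact ⟨by omega, by rwa [T_four_mul_add_three]⟩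
  refine le_trans (le_of_eq ?_) (card_le_card hsub)
  rw [card_insert_of_notMem (by simp only [mem_insert, mem_singleton]; omega),
    card_insert_of_notMem (by simp only [mem_insert, mem_singleton]; omega), card_pair (by omega)]

theorem card_filter_T_mod_eq {N r : ℕ} (hN : Nat.Coprime 7 N) (hr : r < N) :
    #((range (4 * N)).filter (T · % N = r)) = 4 := by
  refine card_filter_eq_of_le_card_filter (t := range N) ?_ ?_ ?_ r (mem_range.2 hr)
  · intro x _
    exact mem_range.2 (Nat.mod_lt _ (by omega))
  · intro s hs
    exact four_le_card_filter_T_mod_eq hN (mem_range.1 hs)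
  · rw [card_range, card_range, mul_comm]

theorem stmt_8 (l : ℕ) :
    (∀ x y : ℕ, x % 2 ^ (l + 2) = y % 2 ^ (l + 2) → T x % 2 ^ l = T y % 2 ^ l) ∧
    (∀ r : ℕ, r < 2 ^ l →
      ((Finset.range (2 ^ (l + 2))).filter (fun x => T x % 2 ^ l = r)).card = 4) := by
  have hpow : 2 ^ (l + 2) = 4 * 2 ^ l := by rw [pow_succ, pow_succ]; ring
  rw [hpow]
  refine ⟨fun x y hxy => ?_, fun r hr => card_filter_T_mod_eq ?_ hr⟩
  · rw [← T_mod_four_mul_mod x, hxy, T_mod_four_mul_mod]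
  · exact Nat.Coprime.pow_right l (by norm_num)
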